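/- arXiv:1610.06618 — 3 statements merged into one kernel-verified Lean document; each statement's English description precedes it below -/
import Mathlib

section
/- Let C ∈ ℝ^{n×n} be an invertible matrix with columns c_1, …, c_n, let c ∈ ℝ^n be a nonzero vector, and let C̃ ∈ ℝ^{n×(n+1)} be the matrix with columns c_1, …, c_i, c, c_{i+1}, …, c_n, where 0 ≤ i ≤ n−1 and the first i+1 columns of C̃ are linearly independent. Suppose j is the smallest integer with i+2 ≤ j ≤ n such that the first j columns of C̃ are linearly dependent. Then C̃_{[∖j]} is invertible, and for every k with j < k ≤ n+1 the matrix C̃_{[∖k]} is not invertible; that is, j is the largest index ≤ n+1 for which deleting the corresponding column of C̃ yields an invertible matrix. -/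
noncomputable section

/-- Euclidean norm of a vector in `ℝ^n`. -/
def euclNorm {n : ℕ} (v : Fin n → ℝ) : ℝ := Real.sqrt (∑ t, (v t) ^ 2)

/-- The `n × n` matrix whose columns are the columns `cols` of an `n × (n+1)` matrix
with the `j`-th column (0-indexed) removed. -/
def deleteCol {n : ℕ} (cols : Fin (n + 1) → Fin n → ℝ) (j : Fin (n + 1)) :
    Matrix (Fin n) (Fin n) ℝ :=
  Matrix.of fun r k => cols (j.succAbove k) r

/-- The columns of the `n × (n+1)` matrix obtained from `C` by inserting the vector `c`
as a new column at (0-indexed) position `p`. -/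
def insertCols {n : ℕ} (C : Matrix (Fin n) (Fin n) ℝ) (c : Fin n → ℝ) (p : Fin (n + 1)) :
    Fin (n + 1) → Fin n → ℝ :=
  p.insertNth c fun j => C.transpose j

/-- The first `m + 1` columns (0-indexed positions `0, …, m`) of a system of `n + 1` columns. -/
def firstCols {n : ℕ} (cols : Fin (n + 1) → Fin n → ℝ) (m : Fin (n + 1)) :
    Fin ((m : ℕ) + 1) → Fin n → ℝ :=
  fun k => cols (Fin.castLE m.isLt k)

/-!
By minimality of `j`, the columns of `C̃` at positions `0, …, j - 1` are independent while those
at `0, …, j` are not, so column `j` lies in the span of the earlier ones. Deleting it therefore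
does not shrink the span of all columns, which contains the columns of the invertible `C` and so
is everything: `C̃_{[∖j]}` is invertible. Deleting a later column `k > j` keeps the dependent
columns `0, …, j` inside `C̃_{[∖k]}`, which is therefore singular.
-/

open Set Submodule

theorem Submodule.span_image_compl_singleton_eq_span_range {R M ι : Type*} [Semiring R]
    [AddCommMonoid M] [Module R M] (f : ι → M) {j : ι} (h : f j ∈ span R (f '' {j}ᶜ)) :
    span R (f '' {j}ᶜ) = span R (range f) := by
  rw [← image_univ, ← union_compl_self {j}, image_union, image_singleton, ← insert_eq,
    span_insert_eq_span h]

section Columns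

variable {n : ℕ}

theorem span_range_insertCols_eq_top {C : Matrix (Fin n) (Fin n) ℝ} (hC : IsUnit C)
    (c : Fin n → ℝ) (p : Fin (n + 1)) : span ℝ (range (insertCols C c p)) = ⊤ := by
  have hCtop : span ℝ (range C.col) = ⊤ := by
    rw [← Matrix.range_mulVecLin, LinearMap.range_eq_top]
    exact Matrix.mulVec_surjective_iff_isUnit.2 hC
  refine eq_top_iff.2 (hCtop ▸ span_mono ?_)
  rintro _ ⟨t, rfl⟩
  exact ⟨p.succAbove t, by simp only [insertCols, Fin.insertNth_apply_succAbove]; rfl⟩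

theorem isUnit_deleteCol_iff_linearIndependent (cols : Fin (n + 1) → Fin n → ℝ)
    (k : Fin (n + 1)) : IsUnit (deleteCol cols k) ↔ LinearIndependent ℝ (cols ∘ k.succAbove) :=
  Matrix.linearIndependent_cols_iff_isUnit.symm

theorem isUnit_deleteCol_iff_span_eq_top (cols : Fin (n + 1) → Fin n → ℝ) (k : Fin (n + 1)) :
    IsUnit (deleteCol cols k) ↔ span ℝ (cols '' {k}ᶜ) = ⊤ := by
  rw [← Matrix.mulVec_surjective_iff_isUnit, ← Matrix.coe_mulVecLin, ← LinearMap.range_eq_top,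
    Matrix.range_mulVecLin, ← Fin.range_succAbove, ← range_comp]
  rfl

theorem linearIndependent_init_firstCols_iff {cols : Fin (n + 1) → Fin n → ℝ}
    {m j : Fin (n + 1)} (hm : (m : ℕ) + 1 = j) :
    LinearIndependent ℝ (Fin.init (firstCols cols j)) ↔
      LinearIndependent ℝ (firstCols cols m) :=
  linearIndependent_equiv (finCongr hm.symm) (f := firstCols cols m)

theorem mem_span_image_compl_of_not_linearIndependent_firstCols
    {cols : Fin (n + 1) → Fin n → ℝ} {j : Fin (n + 1)}
    (hinit : LinearIndependent ℝ (Fin.init (firstCols cols j)))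
    (hdep : ¬ LinearIndependent ℝ (firstCols cols j)) :
    cols j ∈ span ℝ (cols '' {j}ᶜ) := by
  have hlast : firstCols cols j (Fin.last j) ∈ span ℝ (range (Fin.init (firstCols cols j))) :=
    not_not.1 fun h => hdep (linearIndependent_finSucc'.2 ⟨hinit, h⟩)
  refine span_mono ?_ hlast
  rintro _ ⟨t, rfl⟩
  refine ⟨_, fun h => ?_, rfl⟩
  have := congrArg Fin.val h
  simp only [Fin.castLE_castSucc, Fin.val_castLE] at this
  omega

theorem LinearIndependent.firstCols_of_lt {cols : Fin (n + 1) → Fin n → ℝ} {j k : Fin (n + 1)}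
    (h : LinearIndependent ℝ (cols ∘ k.succAbove)) (hjk : j < k) :
    LinearIndependent ℝ (firstCols cols j) := by
  have hjn : (j : ℕ) + 1 ≤ n := by omega
  convert h.comp (Fin.castLE hjn) (Fin.castLE_injective hjn)
  ext t : 1
  have ht : (Fin.castLE hjn t).castSucc < k := by
    rw [Fin.lt_def, Fin.castSucc_castLE, Fin.val_castLE]
    omega
  simp [firstCols, Fin.succAbove_of_castSucc_lt _ _ ht]

end Columns

theorem stmt3_general {n : ℕ} (C : Matrix (Fin n) (Fin n) ℝ) (hC : IsUnit C)
    (c : Fin n → ℝ) (i : Fin n)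
    (hind : LinearIndependent ℝ (firstCols (insertCols C c i.castSucc) i.castSucc))
    (j : Fin (n + 1)) (hj1 : (i : ℕ) + 1 ≤ (j : ℕ))
    (hdep : ¬ LinearIndependent ℝ (firstCols (insertCols C c i.castSucc) j))
    (hmin : ∀ m : Fin (n + 1), (i : ℕ) + 1 ≤ (m : ℕ) → (m : ℕ) < (j : ℕ) →
      LinearIndependent ℝ (firstCols (insertCols C c i.castSucc) m)) :
    IsUnit (deleteCol (insertCols C c i.castSucc) j) ∧
      ∀ k : Fin (n + 1), (j : ℕ) < (k : ℕ) →
        ¬ IsUnit (deleteCol (insertCols C c i.castSucc) k) := by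
  set cols := insertCols C c i.castSucc
  have hinit : LinearIndependent ℝ (Fin.init (firstCols cols j)) := by
    obtain ⟨m, hm⟩ : ∃ m : Fin (n + 1), (m : ℕ) + 1 = j := ⟨⟨j - 1, by omega⟩, Nat.sub_add_cancel (by omega)⟩
    rw [linearIndependent_init_firstCols_iff hm]
    rcases hj1.eq_or_lt with h | h
    · obtain rfl : m = i.castSucc := Fin.ext (by rw [Fin.val_castSucc]; omega)
      exact hind
    · exact hmin m (by omega) (by omega)
  refine ⟨?_, fun k hk hunit => ?_⟩
  · have hj := mem_span_image_compl_of_not_linearIndependent_firstCols hinit hdep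
    rw [isUnit_deleteCol_iff_span_eq_top, span_image_compl_singleton_eq_span_range _ hj]
    exact span_range_insertCols_eq_top hC c _
  · exact hdep (((isUnit_deleteCol_iff_linearIndependent cols k).1 hunit).firstCols_of_lt hk)

/-- With `C` invertible, `c ≠ 0`, the first `i+1` columns of
`C̃ = [c_1, …, c_i, c, c_{i+1}, …, c_n]` linearly independent, suppose `j` (0-indexed,
`i + 1 ≤ j ≤ n - 1`) is the smallest index such that the first `j + 1` columns of `C̃`
are linearly dependent.  Then deleting the `j`-th column of `C̃` yields an invertible
matrix, while deleting any later column `k > j` yields a non-invertible one; i.e. `j` is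
the largest index whose deletion gives an invertible matrix. -/
theorem stmt3 {n : ℕ} (C : Matrix (Fin n) (Fin n) ℝ) (hC : IsUnit C)
    (c : Fin n → ℝ) (hc : c ≠ 0) (i : Fin n)
    (hind : LinearIndependent ℝ (firstCols (insertCols C c i.castSucc) i.castSucc))
    (j : Fin (n + 1)) (hj1 : (i : ℕ) + 1 ≤ (j : ℕ)) (hj2 : (j : ℕ) < n)
    (hdep : ¬ LinearIndependent ℝ (firstCols (insertCols C c i.castSucc) j))
    (hmin : ∀ m : Fin (n + 1), (i : ℕ) + 1 ≤ (m : ℕ) → (m : ℕ) < (j : ℕ) →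
      LinearIndependent ℝ (firstCols (insertCols C c i.castSucc) m)) :
    IsUnit (deleteCol (insertCols C c i.castSucc) j) ∧
      ∀ k : Fin (n + 1), (j : ℕ) < (k : ℕ) →
        ¬ IsUnit (deleteCol (insertCols C c i.castSucc) k) :=
  stmt3_general C hC c i hind j hj1 hdep hmin
end
end

section
/- Let R̄ ∈ ℝ^{n×n} be nonsingular with lattice L(R̄) = {R̄a : a ∈ ℤ^n} and successive minima λ_1 ≤ … ≤ λ_n. Suppose λ_{i−1} < λ_i for some 2 ≤ i ≤ n, and suppose c_1, …, c_i ∈ ℤ^n are such that R̄c_1, …, R̄c_i are linearly independent with ‖R̄c_j‖_2 = λ_j for 1 ≤ j ≤ i. Let c̄_1, …, c̄_k ∈ ℤ^n be any vectors with R̄c̄_1, …, R̄c̄_k linearly independent such that, for each 1 ≤ j ≤ k, either ‖R̄c̄_j‖_2 < λ_i, or ‖R̄c̄_j‖_2 = λ_i and c̄_j is not the i-th column of any solution of the SMP for R̄. Then R̄c̄_1, …, R̄c̄_k, R̄c_i are also linearly independent. -/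
noncomputable section

/-- The lattice vector `R̄ a` associated with the integer vector `a`. -/
def latVec {n : ℕ} (R : Matrix (Fin n) (Fin n) ℝ) (a : Fin n → ℤ) : Fin n → ℝ :=
  R.mulVec fun t => (a t : ℝ)

/-- The `k`-th successive minimum of the lattice `L(R̄) = {R̄ a : a ∈ ℤ^n}`: the smallest
`r` such that the closed ball of radius `r` centered at the origin contains `k` linearly
independent lattice vectors. -/
def lamMin {n : ℕ} (R : Matrix (Fin n) (Fin n) ℝ) (k : ℕ) : ℝ :=
  sInf {r : ℝ | ∃ v : Fin k → Fin n → ℤ,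
    LinearIndependent ℝ (fun j => latVec R (v j)) ∧ ∀ j, euclNorm (latVec R (v j)) ≤ r}

/-- `C` is a solution of the successive minima problem (SMP) for `R̄`: an invertible
integer matrix whose `j`-th column `c_j` satisfies `‖R̄ c_j‖₂ = λ_j` for all `j`. -/
def IsSMPSolution {n : ℕ} (R : Matrix (Fin n) (Fin n) ℝ) (C : Matrix (Fin n) (Fin n) ℤ) : Prop :=
  C.det ≠ 0 ∧ ∀ j : Fin n, euclNorm (latVec R fun t => C t j) = lamMin R ((j : ℕ) + 1)

/-!
If `R̄cᵢ` lay in the span of the `R̄c̄ⱼ`, some `c̄ⱼ` would avoid `V = span(R̄c₁, …, R̄cᵢ₋₁)`.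
A lattice vector outside `V` has norm at least `λᵢ`, because `c₁, …, cᵢ₋₁` attain
`λ₁, …, λᵢ₋₁`; hence `‖R̄c̄ⱼ‖ = λᵢ` and `c₁, …, cᵢ₋₁, c̄ⱼ` attain `λ₁, …, λᵢ`. As only finitely
many lattice vectors lie in a ball, every successive minimum is attained, so such a family
extends greedily to `n` independent vectors attaining all the minima: the columns of an SMP
solution whose `i`-th column is `c̄ⱼ`.
-/

section Norms

variable {n : ℕ}

theorem euclNorm_nonneg (v : Fin n → ℝ) : 0 ≤ euclNorm v := Real.sqrt_nonneg _

theorem abs_apply_le_euclNorm (v : Fin n → ℝ) (t : Fin n) : |v t| ≤ euclNorm v := by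
  rw [euclNorm, ← Real.sqrt_sq_eq_abs]
  exact Real.sqrt_le_sqrt (Finset.single_le_sum (fun s _ => sq_nonneg (v s)) (Finset.mem_univ t))

theorem norm_le_euclNorm (v : Fin n → ℝ) : ‖v‖ ≤ euclNorm v :=
  (pi_norm_le_iff_of_nonneg (euclNorm_nonneg v)).2 fun t => abs_apply_le_euclNorm v t

end Norms

section Minima

variable {n : ℕ} (R : Matrix (Fin n) (Fin n) ℝ)

def admissibleRadii (k : ℕ) : Set ℝ :=
  {r : ℝ | ∃ v : Fin k → Fin n → ℤ,
    LinearIndependent ℝ (fun j => latVec R (v j)) ∧ ∀ j, euclNorm (latVec R (v j)) ≤ r}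

theorem lamMin_eq_sInf (k : ℕ) : lamMin R k = sInf (admissibleRadii R k) := rfl

theorem bddBelow_admissibleRadii (k : ℕ) : BddBelow (admissibleRadii R (k + 1)) :=
  ⟨0, fun _ ⟨_, _, hv⟩ => (euclNorm_nonneg _).trans (hv 0)⟩

theorem lamMin_le_of_linearIndependent {k : ℕ} {v : Fin (k + 1) → Fin n → ℤ} {r : ℝ}
    (hv : LinearIndependent ℝ fun j => latVec R (v j))
    (hvr : ∀ j, euclNorm (latVec R (v j)) ≤ r) : lamMin R (k + 1) ≤ r :=
  (lamMin_eq_sInf R _).trans_le <| csInf_le (bddBelow_admissibleRadii R k) ⟨v, hv, hvr⟩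

variable {R}

theorem latVec_single (j : Fin n) : latVec R (Pi.single j 1) = R.col j := by
  ext t
  simp [latVec, Matrix.mulVec, dotProduct, Pi.single_apply]

theorem admissibleRadii_nonempty (hR : R.det ≠ 0) {k : ℕ} (hk : k ≤ n) :
    (admissibleRadii R k).Nonempty := by
  have hcols := (Matrix.linearIndependent_cols_of_det_ne_zero hR).comp _ (Fin.castLE_injective hk)
  refine ⟨∑ j : Fin k, euclNorm (R.col (Fin.castLE hk j)),
    fun j => Pi.single (Fin.castLE hk j) 1, ?_, fun j => ?_⟩
  · simpa only [latVec_single, Function.comp_def] using hcols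
  · rw [latVec_single]
    exact Finset.single_le_sum (f := fun j => euclNorm (R.col (Fin.castLE hk j)))
      (fun _ _ => euclNorm_nonneg _) (Finset.mem_univ j)

open scoped Matrix.Norms.Operator in
theorem finite_setOf_euclNorm_latVec_le (hR : R.det ≠ 0) (B : ℝ) :
    {a : Fin n → ℤ | euclNorm (latVec R a) ≤ B}.Finite := by
  obtain ⟨N, hN⟩ := exists_nat_ge (‖R⁻¹‖ * B)
  refine (Set.finite_Icc (-fun _ => (N : ℤ)) fun _ => (N : ℤ)).subset fun a ha => ?_
  suffices ∀ t, |a t| ≤ N from ⟨fun t => neg_le_of_abs_le (this t), fun t => le_of_abs_le (this t)⟩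
  intro t
  have hinv : R⁻¹.mulVec (latVec R a) = fun t => (a t : ℝ) := by
    rw [latVec, Matrix.mulVec_mulVec, Matrix.nonsing_inv_mul R (isUnit_iff_ne_zero.2 hR),
      Matrix.one_mulVec]
  have : |(a t : ℝ)| ≤ N := calc
    |(a t : ℝ)| = ‖(R⁻¹.mulVec (latVec R a)) t‖ := by rw [hinv, Real.norm_eq_abs]
    _ ≤ ‖R⁻¹.mulVec (latVec R a)‖ := norm_le_pi_norm _ t
    _ ≤ ‖R⁻¹‖ * ‖latVec R a‖ := Matrix.linfty_opNorm_mulVec _ _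
    _ ≤ ‖R⁻¹‖ * B := by gcongr; exact (norm_le_euclNorm _).trans ha
    _ ≤ N := hN
  exact_mod_cast this

theorem exists_linearIndependent_euclNorm_le_lamMin (hR : R.det ≠ 0) {k : ℕ} (hk : k ≤ n) :
    ∃ v : Fin k → Fin n → ℤ, LinearIndependent ℝ (fun j => latVec R (v j)) ∧
      ∀ j, euclNorm (latVec R (v j)) ≤ lamMin R k := by
  rcases k with _ | k
  · exact ⟨Fin.elim0, linearIndependent_empty_type, fun j => j.elim0⟩
  set maxNorm : (Fin (k + 1) → Fin n → ℤ) → ℝ :=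
    fun v => Finset.univ.sup' Finset.univ_nonempty fun j => euclNorm (latVec R (v j))
  have hS := admissibleRadii_nonempty hR hk
  obtain ⟨r₁, ⟨v₁, hv₁, hv₁r⟩, hr₁⟩ :=
    (csInf_lt_iff (bddBelow_admissibleRadii R k) hS).1 (lt_add_one (lamMin R (k + 1)))
  -- Finitely many tuples have all norms at most `λ_{k+1} + 1`; one minimising the largest norm
  -- attains `λ_{k+1}`.
  set P := {v : Fin (k + 1) → Fin n → ℤ | LinearIndependent ℝ (fun j => latVec R (v j)) ∧
      ∀ j, euclNorm (latVec R (v j)) ≤ lamMin R (k + 1) + 1}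
  have hPfin : P.Finite := (Set.Finite.pi' fun _ => finite_setOf_euclNorm_latVec_le hR _).subset
    fun v hv j => hv.2 j
  obtain ⟨v₀, hv₀, hv₀min⟩ :=
    Set.exists_min_image P maxNorm hPfin ⟨v₁, hv₁, fun j => (hv₁r j).trans hr₁.le⟩
  have hmax : maxNorm v₀ ≤ lamMin R (k + 1) := by
    rw [lamMin_eq_sInf]
    refine le_csInf hS fun r ⟨v, hv, hvr⟩ => ?_
    rcases le_or_gt (lamMin R (k + 1) + 1) r with h | h
    · exact (Finset.sup'_le _ _ fun j _ => hv₀.2 j).trans h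
    · exact (hv₀min v ⟨hv, fun j => (hvr j).trans h.le⟩).trans (Finset.sup'_le _ _ fun j _ => hvr j)
  exact ⟨v₀, hv₀.1, fun j => (Finset.le_sup' (fun j => euclNorm (latVec R (v₀ j)))
    (Finset.mem_univ j)).trans hmax⟩

end Minima

section AttainsMinima

variable {n m : ℕ} {R : Matrix (Fin n) (Fin n) ℝ}

variable (R) in
def AttainsMinima (u : Fin m → Fin n → ℤ) : Prop :=
  (LinearIndependent ℝ fun j => latVec R (u j)) ∧
    ∀ j : Fin m, euclNorm (latVec R (u j)) = lamMin R ((j : ℕ) + 1)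

theorem linearIndependent_latVec_snoc_iff {u : Fin m → Fin n → ℤ} {a : Fin n → ℤ} :
    (LinearIndependent ℝ fun j => latVec R ((Fin.snoc u a : Fin (m + 1) → Fin n → ℤ) j)) ↔
      (LinearIndependent ℝ fun j => latVec R (u j)) ∧
        latVec R a ∉ Submodule.span ℝ (Set.range fun j => latVec R (u j)) := by
  rw [← linearIndependent_finSnoc, ← Function.comp_def (latVec R), Fin.comp_snoc]
  rfl

theorem attainsMinima_snoc_iff {u : Fin m → Fin n → ℤ} {a : Fin n → ℤ} :
    AttainsMinima R (Fin.snoc u a) ↔ AttainsMinima R u ∧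
      latVec R a ∉ Submodule.span ℝ (Set.range fun j => latVec R (u j)) ∧
      euclNorm (latVec R a) = lamMin R (m + 1) := by
  simp only [AttainsMinima, linearIndependent_latVec_snoc_iff, Fin.forall_fin_succ',
    Fin.snoc_castSucc, Fin.snoc_last, Fin.val_castSucc, Fin.val_last]
  tauto

theorem AttainsMinima.lamMin_succ_le_of_notMem_span {u : Fin m → Fin n → ℤ}
    (hu : AttainsMinima R u) {a : Fin n → ℤ}
    (ha : latVec R a ∉ Submodule.span ℝ (Set.range fun j => latVec R (u j))) :
    lamMin R (m + 1) ≤ euclNorm (latVec R a) := by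
  classical
  by_contra! hlt
  have hex : ∃ j, euclNorm (latVec R a) < lamMin R (j + 1) := ⟨m, hlt⟩
  -- `u_1, …, u_j, a` with `j` least such that `‖R̄a‖ < λ_{j+1}` witnesses `λ_{j+1} ≤ ‖R̄a‖`.
  have hjm : Nat.find hex ≤ m := Nat.find_min' hex hlt
  set v : Fin (Nat.find hex) → Fin n → ℤ := fun t => u (Fin.castLE hjm t)
  have hv : (Submodule.span ℝ (Set.range fun t => latVec R (v t))) ≤
      Submodule.span ℝ (Set.range fun j => latVec R (u j)) :=
    Submodule.span_mono (Set.range_comp_subset_range (Fin.castLE hjm) fun j => latVec R (u j))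
  refine (Nat.find_spec hex).not_ge (lamMin_le_of_linearIndependent R (v := Fin.snoc v a) ?_ ?_)
  · rw [linearIndependent_latVec_snoc_iff]
    exact ⟨hu.1.comp _ (Fin.castLE_injective hjm), fun h => ha (hv h)⟩
  · refine Fin.lastCases (by rw [Fin.snoc_last]) fun t => ?_
    rw [Fin.snoc_castSucc, hu.2]
    exact not_lt.1 (Nat.find_min hex t.isLt)

theorem AttainsMinima.exists_snoc (hR : R.det ≠ 0) (hm : m < n) {u : Fin m → Fin n → ℤ}
    (hu : AttainsMinima R u) : ∃ a, AttainsMinima R (Fin.snoc u a) := by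
  obtain ⟨w, hw, hwle⟩ := exists_linearIndependent_euclNorm_le_lamMin hR (Nat.succ_le_of_lt hm)
  set U := Submodule.span ℝ (Set.range fun j => latVec R (u j))
  obtain ⟨t, ht⟩ : ∃ t, latVec R (w t) ∉ U := by
    by_contra! hall
    have hwU : LinearIndependent ℝ fun t => (⟨latVec R (w t), hall t⟩ : U) :=
      LinearIndependent.of_comp U.subtype hw
    have := hwU.fintype_card_le_finrank.trans (finrank_range_le_card fun j => latVec R (u j))
    simp at this
  exact ⟨w t, attainsMinima_snoc_iff.2
    ⟨hu, ht, le_antisymm (hwle t) (hu.lamMin_succ_le_of_notMem_span ht)⟩⟩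

theorem AttainsMinima.exists_extension (hR : R.det ≠ 0) (hm : m ≤ n) {u : Fin m → Fin n → ℤ}
    (hu : AttainsMinima R u) :
    ∃ U : Fin n → Fin n → ℤ, AttainsMinima R U ∧ ∀ j, U (Fin.castLE hm j) = u j := by
  induction h : n - m generalizing m with
  | zero =>
    obtain rfl : m = n := by omega
    exact ⟨u, hu, fun _ => rfl⟩
  | succ d ih =>
    obtain ⟨a, ha⟩ := hu.exists_snoc hR (by omega)
    obtain ⟨U, hU, hUu⟩ := ih (by omega) ha (by omega)
    exact ⟨U, hU, fun j => by simpa using hUu j.castSucc⟩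

theorem AttainsMinima.isSMPSolution {U : Fin n → Fin n → ℤ} (hU : AttainsMinima R U) :
    IsSMPSolution R (Matrix.of fun t j => U j t) := by
  refine ⟨fun h0 => ?_, hU.2⟩
  have hcols : LinearIndependent ℝ (Matrix.of fun t j => (U j t : ℝ)).col :=
    LinearIndependent.of_comp R.mulVecLin hU.1
  rw [Matrix.linearIndependent_cols_iff_isUnit, Matrix.isUnit_iff_isUnit_det] at hcols
  have : (Matrix.of fun t j => (U j t : ℝ)).det = ((Matrix.of fun t j => U j t).det : ℝ) :=
    ((Int.castRingHom ℝ).map_det _).symm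
  simp [this, h0] at hcols

end AttainsMinima

/-- Lemma 2.  Let `R̄` be nonsingular with `λ_{i-1} < λ_i` for some
`2 ≤ i ≤ n`, and let `c_1, …, c_i ∈ ℤ^n` be such that `R̄c_1, …, R̄c_i` are linearly
independent with `‖R̄c_j‖₂ = λ_j` for `1 ≤ j ≤ i`.  Let `c̄_1, …, c̄_k ∈ ℤ^n` be such that
`R̄c̄_1, …, R̄c̄_k` are linearly independent and, for each `j`, either `‖R̄c̄_j‖₂ < λ_i`,
or `‖R̄c̄_j‖₂ = λ_i` and `c̄_j` is not the `i`-th column of any solution of the SMP.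
Then `R̄c̄_1, …, R̄c̄_k, R̄c_i` are also linearly independent. -/
theorem stmt9 {n : ℕ} (R : Matrix (Fin n) (Fin n) ℝ) (hR : R.det ≠ 0)
    (i : ℕ) (h2 : 2 ≤ i) (hin : i ≤ n)
    (c : Fin i → Fin n → ℤ)
    (hindep : LinearIndependent ℝ fun j => latVec R (c j))
    (hnorm : ∀ j : Fin i, euclNorm (latVec R (c j)) = lamMin R ((j : ℕ) + 1))
    (k : ℕ) (cb : Fin k → Fin n → ℤ)
    (hbindep : LinearIndependent ℝ fun j => latVec R (cb j))
    (hcond : ∀ j : Fin k,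
      euclNorm (latVec R (cb j)) < lamMin R i ∨
        (euclNorm (latVec R (cb j)) = lamMin R i ∧
          ¬ ∃ M : Matrix (Fin n) (Fin n) ℤ, IsSMPSolution R M ∧
            (fun t => M t ⟨i - 1, by omega⟩) = cb j)) :
    LinearIndependent ℝ
      (Fin.snoc (fun j => latVec R (cb j)) (latVec R (c ⟨i - 1, by omega⟩)) :
        Fin (k + 1) → Fin n → ℝ) := by
  obtain ⟨p, rfl⟩ : ∃ p, i = p + 1 := ⟨i - 1, by omega⟩
  rw [linearIndependent_finSnoc]
  refine ⟨hbindep, fun hmem => ?_⟩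
  have hc : AttainsMinima R (Fin.snoc (Fin.init c) (c (Fin.last p))) := by
    rw [Fin.snoc_init_self]
    exact ⟨hindep, hnorm⟩
  obtain ⟨hinit, hlast, -⟩ := attainsMinima_snoc_iff.1 hc
  set V := Submodule.span ℝ (Set.range fun j => latVec R (Fin.init c j))
  obtain ⟨j, hj⟩ : ∃ j, latVec R (cb j) ∉ V := by
    by_contra! hall
    exact hlast (Submodule.span_le.2 (Set.range_subset_iff.2 hall) hmem)
  have hge := hinit.lamMin_succ_le_of_notMem_span hj
  obtain hlt | ⟨heq, hnot⟩ := hcond j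
  · exact hlt.not_ge hge
  obtain ⟨U, hU, hUc⟩ := (attainsMinima_snoc_iff.2 ⟨hinit, hj, heq⟩).exists_extension hR hin
  exact hnot ⟨_, hU.isSMPSolution, (hUc (Fin.last p)).trans (Fin.snoc_last _ _)⟩
end
end

section
/- Let R̄ ∈ ℝ^{n×n} be nonsingular with lattice L(R̄) = {R̄a : a ∈ ℤ^n} and successive minima λ_1 ≤ … ≤ λ_n. Suppose c_1, …, c_{i−1} ∈ ℤ^n satisfy that R̄c_1, …, R̄c_{i−1} are linearly independent with ‖R̄c_j‖_2 = λ_j for 1 ≤ j ≤ i−1, and let c̄ ∈ ℤ^n satisfy ‖R̄c̄‖_2 = λ_i. If c̄ is not the i-th column of any solution of the SMP for R̄, then R̄c̄ is a linear combination of R̄c_1, …, R̄c_{i−1}. -/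
/-!
If `R̄c̄` were outside the span, then `c_1, …, c_{i-1}, c̄` would be `i` integer vectors whose
images are independent and attain `λ_1, …, λ_i`. Such a family extends greedily to `n` vectors:
`λ_{k+1}` is attained by `k + 1` independent lattice vectors (a ball contains finitely many
lattice vectors), one of them lies outside the `k`-dimensional span of the family, and a lattice
vector outside the span of vectors attaining `λ_1, …, λ_k` has length at least `λ_{k+1}`. The
`n` integer vectors then form a matrix with nonzero determinant, i.e. an SMP solution whose
`i`-th column is `c̄`.
-/

noncomputable section

open Matrix Set Submodule

namespace SuccessiveMinima

variable {n : ℕ} {R : Matrix (Fin n) (Fin n) ℝ}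

lemma abs_le_euclNorm (v : Fin n → ℝ) (s : Fin n) : |v s| ≤ euclNorm v := by
  rw [euclNorm, ← Real.sqrt_sq_eq_abs]
  exact Real.sqrt_le_sqrt (Finset.single_le_sum (fun t _ => sq_nonneg (v t)) (Finset.mem_univ s))

lemma norm_le_euclNorm (v : Fin n → ℝ) : ‖v‖ ≤ euclNorm v :=
  (pi_norm_le_iff_of_nonneg (Real.sqrt_nonneg _)).2 (abs_le_euclNorm v)

open scoped Matrix.Norms.Operator in
lemma finite_setOf_euclNorm_latVec_le (hR : R.det ≠ 0) (B : ℝ) :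
    {a | euclNorm (latVec R a) ≤ B}.Finite := by
  refine ((isCompact_closedBall (0 : Fin n → ℤ) (‖R⁻¹‖ * B)).finite
    DiscreteTopology.isDiscrete).subset fun a ha => ?_
  rw [mem_closedBall_zero_iff]
  calc ‖a‖ = ‖fun t => (a t : ℝ)‖ := rfl
    _ = ‖R⁻¹ *ᵥ latVec R a‖ := by
      rw [latVec, mulVec_mulVec, nonsing_inv_mul R (isUnit_iff_ne_zero.2 hR), one_mulVec]
    _ ≤ ‖R⁻¹‖ * ‖latVec R a‖ := linfty_opNorm_mulVec _ _
    _ ≤ ‖R⁻¹‖ * B := by gcongr; exact (norm_le_euclNorm _).trans ha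

variable (R) in
def admissibleRadii (k : ℕ) : Set ℝ :=
  {r | ∃ v : Fin k → Fin n → ℤ,
    LinearIndependent ℝ (fun j => latVec R (v j)) ∧ ∀ j, euclNorm (latVec R (v j)) ≤ r}

lemma lamMin_eq_sInf (k : ℕ) : lamMin R k = sInf (admissibleRadii R k) := rfl

lemma lamMin_succ_le {k : ℕ} {v : Fin (k + 1) → Fin n → ℤ}
    (hv : LinearIndependent ℝ fun j => latVec R (v j)) {r : ℝ}
    (hr : ∀ j, euclNorm (latVec R (v j)) ≤ r) : lamMin R (k + 1) ≤ r :=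
  csInf_le ⟨0, fun _ ⟨_, _, hv⟩ => (Real.sqrt_nonneg _).trans (hv 0)⟩ ⟨v, hv, hr⟩

lemma admissibleRadii_nonempty (hR : R.det ≠ 0) {k : ℕ} (hk : k ≤ n) :
    (admissibleRadii R k).Nonempty := by
  classical
  have hcol (j : Fin n) : latVec R (Pi.single j 1) = Rᵀ j := by
    ext s
    simp [latVec, mulVec, dotProduct, Pi.single_apply]
  have hcols : LinearIndependent ℝ fun j => Rᵀ j :=
    linearIndependent_cols_iff_isUnit.2 <|
      (isUnit_iff_isUnit_det R).2 (isUnit_iff_ne_zero.2 hR)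
  obtain ⟨r, hr⟩ :=
    (finite_range fun j : Fin k => euclNorm (Rᵀ (Fin.castLE hk j))).bddAbove
  refine ⟨r, fun j => Pi.single (Fin.castLE hk j) 1, ?_, fun j => ?_⟩
  · simp only [hcol]
    exact hcols.comp _ (Fin.castLE_injective hk)
  · exact (hcol _).symm ▸ hr ⟨j, rfl⟩

lemma exists_euclNorm_le_of_mem_admissibleRadii {k : ℕ} {r : ℝ}
    (hr : r ∈ admissibleRadii R (k + 1)) :
    ∃ a, euclNorm (latVec R a) ∈ admissibleRadii R (k + 1) ∧ euclNorm (latVec R a) ≤ r := by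
  obtain ⟨v, hv, hvr⟩ := hr
  obtain ⟨j, hj⟩ := Finite.exists_max fun j => euclNorm (latVec R (v j))
  exact ⟨v j, ⟨v, hv, hj⟩, hvr j⟩

/-- Only finitely many lattice vectors are shorter than a given admissible radius `r₀`, and every
admissible radius below `r₀` dominates an admissible one among their lengths; so the infimum is
the least of finitely many admissible radii. -/
lemma lamMin_mem_admissibleRadii (hR : R.det ≠ 0) {k : ℕ} (hk : k + 1 ≤ n) :
    lamMin R (k + 1) ∈ admissibleRadii R (k + 1) := by
  set S := admissibleRadii R (k + 1)
  obtain ⟨r₀, hr₀⟩ := admissibleRadii_nonempty hR hk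
  set A := {a | euclNorm (latVec R a) ≤ r₀ ∧ euclNorm (latVec R a) ∈ S}
  have hA : A.Finite := (finite_setOf_euclNorm_latVec_le hR r₀).subset fun _ ha => ha.1
  have hA₀ : A.Nonempty :=
    let ⟨a, haS, har⟩ := exists_euclNorm_le_of_mem_admissibleRadii hr₀
    ⟨a, har, haS⟩
  obtain ⟨a₀, ha₀, hmin⟩ := Set.exists_min_image A (fun a => euclNorm (latVec R a)) hA hA₀
  have hleast : IsLeast S (euclNorm (latVec R a₀)) := by
    refine ⟨ha₀.2, fun r hr => ?_⟩
    obtain ⟨a, haS, har⟩ := exists_euclNorm_le_of_mem_admissibleRadii hr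
    rcases le_or_gt (euclNorm (latVec R a)) r₀ with har₀ | har₀
    · exact (hmin a ⟨har₀, haS⟩).trans har
    · linarith [ha₀.1]
  rw [lamMin_eq_sInf, hleast.csInf_eq]
  exact hleast.1

lemma linearIndependent_latVec_snoc {k : ℕ} {u : Fin k → Fin n → ℤ}
    (hu : LinearIndependent ℝ fun j => latVec R (u j)) {w : Fin n → ℤ}
    (hw : latVec R w ∉ span ℝ (range fun j => latVec R (u j))) :
    LinearIndependent ℝ fun j => latVec R ((Fin.snoc u w : Fin (k + 1) → Fin n → ℤ) j) := by
  rw [← Function.comp_def, Fin.comp_snoc]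
  exact linearIndependent_finSnoc.2 ⟨hu, hw⟩

lemma lamMin_succ_le_of_forall_euclNorm_le {k : ℕ} {u : Fin k → Fin n → ℤ}
    (hu : LinearIndependent ℝ fun j => latVec R (u j)) {w : Fin n → ℤ}
    (hw : latVec R w ∉ span ℝ (range fun j => latVec R (u j)))
    (hle : ∀ j, euclNorm (latVec R (u j)) ≤ euclNorm (latVec R w)) :
    lamMin R (k + 1) ≤ euclNorm (latVec R w) :=
  lamMin_succ_le (linearIndependent_latVec_snoc hu hw) <|
    Fin.lastCases (by simp) fun j => by simpa using hle j

variable (R) in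
def AttainsMinima {k : ℕ} (u : Fin k → Fin n → ℤ) : Prop :=
  (LinearIndependent ℝ fun j => latVec R (u j)) ∧
    ∀ j : Fin k, euclNorm (latVec R (u j)) = lamMin R ((j : ℕ) + 1)

namespace AttainsMinima

lemma init {k : ℕ} {u : Fin (k + 1) → Fin n → ℤ} (hu : AttainsMinima R u) :
    AttainsMinima R (Fin.init u) :=
  ⟨hu.1.comp _ (Fin.castSucc_injective k), fun j => hu.2 (Fin.castSucc j)⟩

lemma snoc {k : ℕ} {u : Fin k → Fin n → ℤ} (hu : AttainsMinima R u) {w : Fin n → ℤ}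
    (hw : latVec R w ∉ span ℝ (range fun j => latVec R (u j)))
    (hwk : euclNorm (latVec R w) = lamMin R (k + 1)) :
    AttainsMinima R (Fin.snoc u w : Fin (k + 1) → Fin n → ℤ) :=
  ⟨linearIndependent_latVec_snoc hu.1 hw, Fin.lastCases (by simpa using hwk)
    fun j => by simpa using hu.2 j⟩

lemma euclNorm_le_of_notMem_span {k : ℕ} {u : Fin k → Fin n → ℤ} (hu : AttainsMinima R u)
    {w : Fin n → ℤ} (hw : latVec R w ∉ span ℝ (range fun j => latVec R (u j))) (j : Fin k) :
    euclNorm (latVec R (u j)) ≤ euclNorm (latVec R w) := by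
  induction k with
  | zero => exact j.elim0
  | succ k ih =>
    have hw' : latVec R w ∉ span ℝ (range fun j => latVec R (Fin.init u j)) :=
      fun h => hw (span_mono (range_subset_iff.2 fun j => mem_range_self (Fin.castSucc j)) h)
    have hinit := ih hu.init hw'
    induction j using Fin.lastCases with
    | last => exact (hu.2 _).trans_le (lamMin_succ_le_of_forall_euclNorm_le hu.init.1 hw' hinit)
    | cast j => exact hinit j

lemma lamMin_succ_le_of_notMem_span {k : ℕ} {u : Fin k → Fin n → ℤ} (hu : AttainsMinima R u)
    {w : Fin n → ℤ} (hw : latVec R w ∉ span ℝ (range fun j => latVec R (u j))) :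
    lamMin R (k + 1) ≤ euclNorm (latVec R w) :=
  lamMin_succ_le_of_forall_euclNorm_le hu.1 hw (hu.euclNorm_le_of_notMem_span hw)

/-- One of the `k + 1` independent vectors attaining `λ_{k+1}` escapes the `k`-dimensional
span of `u`, and it cannot be shorter than `λ_{k+1}`. -/
lemma exists_snoc (hR : R.det ≠ 0) {k : ℕ} (hk : k < n) {u : Fin k → Fin n → ℤ}
    (hu : AttainsMinima R u) :
    ∃ w, AttainsMinima R (Fin.snoc u w : Fin (k + 1) → Fin n → ℤ) := by
  obtain ⟨v, hv, hvle⟩ := lamMin_mem_admissibleRadii hR hk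
  obtain ⟨m, hm⟩ : ∃ m, latVec R (v m) ∉ span ℝ (range fun j => latVec R (u j)) := by
    by_contra! h
    have hle := Submodule.finrank_mono (span_le.2 (range_subset_iff.2 h))
    have hrank := finrank_range_le_card (R := ℝ) fun j => latVec R (u j)
    rw [finrank_span_eq_card hv] at hle
    simp only [Set.finrank, Fintype.card_fin] at hle hrank
    omega
  exact ⟨v m, hu.snoc hm (le_antisymm (hvle m) (hu.lamMin_succ_le_of_notMem_span hm))⟩

lemma exists_extend (hR : R.det ≠ 0) {k : ℕ} (hk : k ≤ n) {u : Fin k → Fin n → ℤ}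
    (hu : AttainsMinima R u) :
    ∃ U : Fin n → Fin n → ℤ, AttainsMinima R U ∧ ∀ j, U (Fin.castLE hk j) = u j := by
  induction hd : n - k generalizing k with
  | zero =>
    obtain rfl : k = n := by omega
    exact ⟨u, hu, fun j => rfl⟩
  | succ d ih =>
    obtain ⟨w, huw⟩ := hu.exists_snoc hR (by omega)
    obtain ⟨U, hU, hUu⟩ := ih (by omega) huw (by omega)
    exact ⟨U, hU, fun j => by simpa using hUu (Fin.castSucc j)⟩

end AttainsMinima

lemma det_ne_zero_of_linearIndependent_latVec {U : Fin n → Fin n → ℤ}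
    (hU : LinearIndependent ℝ fun j => latVec R (U j)) :
    (Matrix.of fun t j => U j t).det ≠ 0 := by
  set M : Matrix (Fin n) (Fin n) ℤ := Matrix.of fun t j => U j t
  have hcols : LinearIndependent ℝ fun j => (M.map (Int.cast : ℤ → ℝ))ᵀ j :=
    LinearIndependent.of_comp R.mulVecLin hU
  have hdet := ((isUnit_iff_isUnit_det _).1 (linearIndependent_cols_iff_isUnit.1 hcols)).ne_zero
  rw [show M.map (Int.cast : ℤ → ℝ) = (Int.castRingHom ℝ).mapMatrix M from rfl,
    ← RingHom.map_det] at hdet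
  exact fun h => hdet (by simp [h])

end SuccessiveMinima

/-- Let `R̄` be nonsingular with successive minima `λ_1 ≤ … ≤ λ_n` and
`1 ≤ i ≤ n`.  Suppose `c_1, …, c_{i-1} ∈ ℤ^n` are such that `R̄c_1, …, R̄c_{i-1}` are
linearly independent with `‖R̄c_j‖₂ = λ_j` for `1 ≤ j ≤ i-1`, and let `c̄ ∈ ℤ^n` satisfy
`‖R̄c̄‖₂ = λ_i`.  If `c̄` is not the `i`-th column of any solution of the SMP for `R̄`,
then `R̄c̄ ∈ span{R̄c_1, …, R̄c_{i-1}}`. -/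
theorem stmt19 {n : ℕ} (R : Matrix (Fin n) (Fin n) ℝ) (hR : R.det ≠ 0)
    (i : ℕ) (h1 : 1 ≤ i) (hin : i ≤ n)
    (c : Fin (i - 1) → Fin n → ℤ)
    (hindep : LinearIndependent ℝ fun j => latVec R (c j))
    (hnorm : ∀ j : Fin (i - 1), euclNorm (latVec R (c j)) = lamMin R ((j : ℕ) + 1))
    (cb : Fin n → ℤ) (hcb : euclNorm (latVec R cb) = lamMin R i)
    (hnot : ¬ ∃ M : Matrix (Fin n) (Fin n) ℤ, IsSMPSolution R M ∧
      (fun t => M t ⟨i - 1, by omega⟩) = cb) :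
    latVec R cb ∈ Submodule.span ℝ (Set.range fun j => latVec R (c j)) := by
  by_contra hcb_span
  have hsnoc :
      SuccessiveMinima.AttainsMinima R (Fin.snoc c cb : Fin (i - 1 + 1) → Fin n → ℤ) :=
    SuccessiveMinima.AttainsMinima.snoc ⟨hindep, hnorm⟩ hcb_span
      (by rwa [Nat.sub_add_cancel h1])
  obtain ⟨U, hU, hUc⟩ := hsnoc.exists_extend hR (by omega)
  refine hnot ⟨Matrix.of fun t j => U j t,
    ⟨SuccessiveMinima.det_ne_zero_of_linearIndependent_latVec hU.1, hU.2⟩, ?_⟩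
  exact (hUc (Fin.last (i - 1))).trans (Fin.snoc_last _ _)
end
end
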